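/- arXiv:2505.14545 — 3 statements merged into one kernel-verified Lean document; each statement's English description precedes it below -/
import Mathlib

section
/- Let $A = kQ_n$ be the path algebra of the Kronecker-type quiver $Q_n$ with two vertices $e_1, e_2$ and $n$ arrows from $e_2$ to $e_1$, and let $\otimes$ denote the vertex-wise tensor product of right $A$-modules (i.e. $(M \otimes N)_v = M_v \otimes N_v$ and $f^{M\otimes N}_x = f^M_x \otimes f^N_x$). Then $e_1 A \otimes e_1 A \cong e_1 A \oplus (e_2 A)^{n^2 - n}$, $e_1 A \otimes e_2 A \cong (e_2 A)^n$, and $e_2 A \otimes e_2 A \cong e_2 A$. -/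
open scoped TensorProduct

/-- A representation of the quiver `Qₙ` (two vertices `e₁, e₂` and `n` arrows
`x₁, …, xₙ` from `e₂` to `e₁`), equivalently a right module over the path algebra
`kQₙ`: a pair of vector spaces `(M₁, M₂) = (M_{e₁}, M_{e₂})` together with `n` linear
maps `M₁ → M₂` (the right actions of the arrows). -/
structure QRep (k : Type) [Field k] (n : ℕ) where
  M1 : Type
  M2 : Type
  acg1 : AddCommGroup M1
  acg2 : AddCommGroup M2
  mod1 : Module k M1
  mod2 : Module k M2
  f : Fin n → M1 →ₗ[k] M2

attribute [instance] QRep.acg1 QRep.acg2 QRep.mod1 QRep.mod2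

variable {k : Type} [Field k] {n : ℕ}

/-- The vertex-wise tensor product of two representations of `Qₙ`:
`(M ⊗ N)_v = M_v ⊗ N_v` and `f_x^{M⊗N} = f_x^M ⊗ f_x^N`. -/
noncomputable def QRep.tensor (A B : QRep k n) : QRep k n where
  M1 := A.M1 ⊗[k] B.M1
  M2 := A.M2 ⊗[k] B.M2
  acg1 := inferInstance
  acg2 := inferInstance
  mod1 := inferInstance
  mod2 := inferInstance
  f i := TensorProduct.map (A.f i) (B.f i)

/-- The direct sum of two representations of `Qₙ`. -/
def QRep.dsum (A B : QRep k n) : QRep k n where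
  M1 := A.M1 × B.M1
  M2 := A.M2 × B.M2
  acg1 := inferInstance
  acg2 := inferInstance
  mod1 := inferInstance
  mod2 := inferInstance
  f i := (A.f i).prodMap (B.f i)

/-- The indecomposable projective `e₁A`: `(e₁A)_{e₁} = k`, `(e₁A)_{e₂} = kⁿ`, with the
arrow `xᵢ` acting by the `i`-th coordinate inclusion `k → kⁿ`. -/
def e1A (k : Type) [Field k] (n : ℕ) : QRep k n where
  M1 := k
  M2 := Fin n → k
  acg1 := inferInstance
  acg2 := inferInstance
  mod1 := inferInstance
  mod2 := inferInstance
  f i := LinearMap.single k (fun _ : Fin n => k) i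

/-- The direct sum of `m` copies of the indecomposable projective `e₂A`
(`(e₂A)_{e₁} = 0`, `(e₂A)_{e₂} = k`, arrows acting by `0`); so `e2pow k n 1 = e₂A`. -/
def e2pow (k : Type) [Field k] (n m : ℕ) : QRep k n where
  M1 := Fin 0 → k
  M2 := Fin m → k
  acg1 := inferInstance
  acg2 := inferInstance
  mod1 := inferInstance
  mod2 := inferInstance
  f _ := 0

/-- An isomorphism of representations of `Qₙ`: a pair of linear isomorphisms at the two
vertices commuting with the action of every arrow. -/
structure QRepIso (A B : QRep k n) where
  e1 : A.M1 ≃ₗ[k] B.M1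
  e2 : A.M2 ≃ₗ[k] B.M2
  comm : ∀ i : Fin n, (e2 : A.M2 →ₗ[k] B.M2).comp (A.f i) = (B.f i).comp (e1 : A.M1 →ₗ[k] B.M1)

/-!
Every summand `e₂A` vanishes at `e₁`, so any pair of vertexwise linear isomorphisms onto a
sum of copies of `e₂A` commutes with the arrows, which all start at `e₁`; this settles the
last two isomorphisms by counting dimensions. For `e₁A ⊗ e₁A`, identify `kⁿ ⊗ kⁿ` with
`k^{n × n}`: the arrow `xᵢ` sends `1 ⊗ 1` to the basis vector at `(i, i)`, so the diagonal
coordinates together with `(e₁A ⊗ e₁A)_{e₁} = k` form a copy of `e₁A`, while the `n² - n`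
off-diagonal coordinates are not hit by any arrow and form copies of `e₂A`.
-/

section

variable (R : Type*) [CommSemiring R] (ι κ : Type*) [Fintype ι] [DecidableEq ι]

noncomputable def piTensorPiEquiv : ((ι → R) ⊗[R] (κ → R)) ≃ₗ[R] (ι × κ → R) :=
  TensorProduct.comm R _ _ ≪≫ₗ TensorProduct.piScalarRight R R (κ → R) ι ≪≫ₗ
    (LinearEquiv.curry R R ι κ).symm

variable {R ι κ}

lemma piTensorPiEquiv_single_tmul_single [DecidableEq κ] (i : ι) (j : κ) (x y : R) :
    piTensorPiEquiv R ι κ (Pi.single i x ⊗ₜ Pi.single j y) = Pi.single (i, j) (x * y) := by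
  ext ⟨a, b⟩
  by_cases ha : a = i <;> by_cases hb : b = j <;> simp [piTensorPiEquiv, Pi.single_apply, ha, hb]

variable (R) in
noncomputable def tensorFinOneEquiv (M : Type*) [AddCommMonoid M] [Module R M] :
    (M ⊗[R] (Fin 1 → R)) ≃ₗ[R] M :=
  TensorProduct.piScalarRight R R M (Fin 1) ≪≫ₗ .funUnique (Fin 1) R M

end

section

variable (ι : Type*)

def diagEquiv : ι ≃ {p : ι × ι // p.1 = p.2} where
  toFun i := ⟨(i, i), rfl⟩
  invFun p := p.1.1
  left_inv _ := rfl
  right_inv := by rintro ⟨⟨a, b⟩, h : a = b⟩; cases h; rfl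

lemma card_offDiag [Fintype ι] [DecidableEq ι] :
    Fintype.card {p : ι × ι // p.1 ≠ p.2} = Fintype.card ι ^ 2 - Fintype.card ι := by
  rw [Fintype.card_subtype_compl, ← Fintype.card_congr (diagEquiv ι), Fintype.card_prod, sq]

variable [DecidableEq ι]

def prodSelfEquivSumOffDiag : ι × ι ≃ ι ⊕ {p : ι × ι // p.1 ≠ p.2} :=
  (Equiv.sumCompl fun p : ι × ι => p.1 = p.2).symm.trans
    (Equiv.sumCongr (diagEquiv ι).symm (Equiv.refl _))

variable (R M : Type*) [Semiring R] [AddCommMonoid M] [Module R M]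

def funProdSelfEquivDiagProdOffDiag :
    (ι × ι → M) ≃ₗ[R] (ι → M) × ({p : ι × ι // p.1 ≠ p.2} → M) :=
  LinearEquiv.funCongrLeft R M (prodSelfEquivSumOffDiag ι).symm ≪≫ₗ
    LinearEquiv.sumArrowLequivProdArrow _ _ R M

variable {ι R M}

lemma funProdSelfEquivDiagProdOffDiag_single_diag (i : ι) (m : M) :
    funProdSelfEquivDiagProdOffDiag ι R M (Pi.single (i, i) m) = (Pi.single i m, 0) := by
  ext j
  · by_cases h : j = i <;>
      simp [funProdSelfEquivDiagProdOffDiag, prodSelfEquivSumOffDiag, diagEquiv, h]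
  · obtain ⟨⟨a, b⟩, hab : a ≠ b⟩ := j
    have : (a, b) ≠ (i, i) := by rintro ⟨rfl, rfl⟩; exact hab rfl
    simp [funProdSelfEquivDiagProdOffDiag, prodSelfEquivSumOffDiag, this]

end

def QRepIso.ofSubsingleton {A B : QRep k n} [Subsingleton B.M1] (e1 : A.M1 ≃ₗ[k] B.M1)
    (e2 : A.M2 ≃ₗ[k] B.M2) : QRepIso A B where
  e1 := e1
  e2 := e2
  comm i := by
    have : Subsingleton A.M1 := e1.toEquiv.subsingleton
    ext x
    simp [Subsingleton.elim x 0]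

instance (m : ℕ) : Unique (e2pow k n m).M1 := inferInstanceAs (Unique (Fin 0 → k))

noncomputable def offDiagEquivFin (n : ℕ) :
    {p : Fin n × Fin n // p.1 ≠ p.2} ≃ Fin (n ^ 2 - n) :=
  Fintype.equivFinOfCardEq (by rw [card_offDiag, Fintype.card_fin])

variable (k) in
noncomputable def finTensorFinEquiv (n : ℕ) :
    ((Fin n → k) ⊗[k] (Fin n → k)) ≃ₗ[k] (Fin n → k) × (Fin (n ^ 2 - n) → k) :=
  piTensorPiEquiv k (Fin n) (Fin n) ≪≫ₗ funProdSelfEquivDiagProdOffDiag (Fin n) k k ≪≫ₗ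
    (LinearEquiv.refl k _).prodCongr (LinearEquiv.funCongrLeft k k (offDiagEquivFin n).symm)

lemma finTensorFinEquiv_single_tmul_single (i : Fin n) (x y : k) :
    finTensorFinEquiv k n (Pi.single i x ⊗ₜ Pi.single i y) = (Pi.single i (x * y), 0) := by
  simp only [finTensorFinEquiv, LinearEquiv.trans_apply, piTensorPiEquiv_single_tmul_single,
    funProdSelfEquivDiagProdOffDiag_single_diag, LinearEquiv.prodCongr_apply,
    LinearEquiv.refl_apply, map_zero]

variable (k n) in
noncomputable def e1ATensorSelfIso :
    QRepIso ((e1A k n).tensor (e1A k n)) ((e1A k n).dsum (e2pow k n (n ^ 2 - n))) where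
  e1 := TensorProduct.lid k k ≪≫ₗ LinearEquiv.prodUnique.symm
  e2 := finTensorFinEquiv k n
  comm i := TensorProduct.ext' fun (x y : k) => by
    change finTensorFinEquiv k n (Pi.single i x ⊗ₜ Pi.single i y) = (Pi.single i (x • y), 0)
    rw [finTensorFinEquiv_single_tmul_single, smul_eq_mul]

theorem stmt_3 (k : Type) [Field k] (n : ℕ) :
    Nonempty (QRepIso ((e1A k n).tensor (e1A k n))
        ((e1A k n).dsum (e2pow k n (n ^ 2 - n)))) ∧
    Nonempty (QRepIso ((e1A k n).tensor (e2pow k n 1)) (e2pow k n n)) ∧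
    Nonempty (QRepIso ((e2pow k n 1).tensor (e2pow k n 1)) (e2pow k n 1)) :=
  ⟨⟨e1ATensorSelfIso k n⟩,
    ⟨.ofSubsingleton (TensorProduct.lid k _) (tensorFinOneEquiv k (Fin n → k))⟩,
    ⟨.ofSubsingleton
      (TensorProduct.piScalarRight k k (Fin 0 → k) (Fin 0) ≪≫ₗ
        .ofSubsingleton (Fin 0 → Fin 0 → k) (Fin 0 → k))
      (tensorFinOneEquiv k (Fin 1 → k))⟩⟩
end

section
/- With notation as for the quiver $Q_n$ and its vertex-wise tensor product of modules, the $p$-fold tensor power of the path algebra $A = kQ_n$ (as a right module over itself, $A = e_1 A \oplus e_2 A$) decomposes as $A^{\otimes p} \cong e_1 A \oplus (e_2 A)^{(n+1)^p - n}$ for all $p \geq 1$. -/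
open scoped TensorProduct
variable {k : Type} [Field k] {n : ℕ}

/-- The path algebra `A = kQₙ` as a right module over itself: `A = e₁A ⊕ e₂A`. -/
noncomputable def Arep (k : Type) [Field k] (n : ℕ) : QRep k n :=
  (e1A k n).dsum (e2pow k n 1)

/-- `tpow k n p` is the `(p+1)`-fold vertex-wise tensor power `A^{⊗(p+1)}` of the path
algebra `A = kQₙ` as a right module over itself. -/
noncomputable def tpow (k : Type) [Field k] (n : ℕ) : ℕ → QRep k n
  | 0 => Arep k n
  | p + 1 => (tpow k n p).tensor (Arep k n)


/-!
If `dim R_{e₁} = 1`, `dim R_{e₂} = d`, and the arrows send a nonzero `u ∈ R_{e₁}` to linearly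
independent vectors `xᵢ u`, then extending `(xᵢ u)ᵢ` to a basis of `R_{e₂}` exhibits
`R ≅ e₁A ⊕ (e₂A)^{d-n}`. These conditions pass to vertex-wise tensor products, with `d`
multiplied, because `xᵢ (u ⊗ w) = xᵢ u ⊗ xᵢ w` and the diagonal of a tensor product of
independent families is independent. `A` satisfies them with `d = n + 1`, hence `A^{⊗p}` with
`d = (n + 1)^p`.
-/

open Module

lemma LinearIndependent.tmul_diagonal {R M N ι : Type*} [CommRing R] [IsDomain R]
    [AddCommGroup M] [Module R M] [AddCommGroup N] [Module R N] {v : ι → M} {w : ι → N}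
    (hv : LinearIndependent R v) (hw : LinearIndependent R w) :
    LinearIndependent R fun i => v i ⊗ₜ[R] w i :=
  (hv.tmul_of_isDomain hw).comp (fun i => (i, i)) fun _ _ h => congrArg Prod.fst h

lemma LinearIndependent.exists_basis_sum_fin {K V : Type*} [Field K] [AddCommGroup V]
    [Module K V] [FiniteDimensional K V] {n m : ℕ} {v : Fin n → V}
    (hv : LinearIndependent K v) (h : finrank K V = n + m) :
    ∃ b : Basis (Fin n ⊕ Fin m) K V, ∀ i, b (.inl i) = v i := by
  let b := Basis.sumExtend hv
  have : Finite (Fin n ⊕ Basis.sumExtendIndex hv) := Module.Finite.finite_basis b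
  have : Finite (Basis.sumExtendIndex hv) :=
    Finite.of_injective _ (Sum.inr_injective (α := Fin n))
  have hcard : Nat.card (Basis.sumExtendIndex hv) = m := by
    have := finrank_eq_nat_card_basis b
    rw [Nat.card_sum, Nat.card_eq_fintype_card, Fintype.card_fin] at this
    omega
  refine ⟨b.reindex (Equiv.sumCongr (Equiv.refl _) (Finite.equivFinOfCardEq hcard)), fun i => ?_⟩
  simp only [b, Basis.sumExtend, Basis.reindex_apply, Basis.coe_extend]
  rfl

structure QRep.IsE1AType (R : QRep k n) (d : ℕ) : Prop where
  finiteDimensional_M2 : FiniteDimensional k R.M2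
  finrank_M1 : finrank k R.M1 = 1
  finrank_M2 : finrank k R.M2 = d
  exists_linearIndependent : ∃ u : R.M1, u ≠ 0 ∧ LinearIndependent k fun i => R.f i u

namespace QRep.IsE1AType

variable {R S : QRep k n} {d d' : ℕ}

theorem tensor (hR : R.IsE1AType d) (hS : S.IsE1AType d') :
    (R.tensor S).IsE1AType (d * d') where
  finiteDimensional_M2 :=
    have := hR.finiteDimensional_M2
    have := hS.finiteDimensional_M2
    inferInstanceAs (FiniteDimensional k (R.M2 ⊗[k] S.M2))
  finrank_M1 := by
    show finrank k (R.M1 ⊗[k] S.M1) = 1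
    rw [finrank_tensorProduct, hR.finrank_M1, hS.finrank_M1]
  finrank_M2 := by
    show finrank k (R.M2 ⊗[k] S.M2) = d * d'
    rw [finrank_tensorProduct, hR.finrank_M2, hS.finrank_M2]
  exists_linearIndependent := by
    obtain ⟨u, hu, hRu⟩ := hR.exists_linearIndependent
    obtain ⟨w, hw, hSw⟩ := hS.exists_linearIndependent
    have huw : LinearIndependent k fun _ : Unit => u ⊗ₜ[k] w :=
      (linearIndependent_unique_iff.2 hu).tmul_diagonal (linearIndependent_unique_iff.2 hw)
    exact ⟨u ⊗ₜ w, huw.ne_zero (), hRu.tmul_diagonal hSw⟩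

theorem nonempty_qrepIso {m : ℕ} (hR : R.IsE1AType (n + m)) :
    Nonempty (QRepIso R ((e1A k n).dsum (e2pow k n m))) := by
  have := hR.finiteDimensional_M2
  obtain ⟨u, hu, hRu⟩ := hR.exists_linearIndependent
  obtain ⟨b, hb⟩ := hRu.exists_basis_sum_fin hR.finrank_M2
  let b₁ := FiniteDimensional.basisSingleton Unit hR.finrank_M1 u hu
  let e₁ := b₁.equivFun ≪≫ₗ LinearEquiv.funUnique Unit k k ≪≫ₗ
    (LinearEquiv.prodUnique (R := k) (M₂ := Fin 0 → k)).symm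
  let e₂ := b.equivFun ≪≫ₗ LinearEquiv.sumArrowLequivProdArrow (Fin n) (Fin m) k k
  refine ⟨⟨e₁, e₂, fun i => b₁.ext fun _ => ?_⟩⟩
  have hfb : R.f i (b₁ ()) = b (.inl i) := by
    rw [FiniteDimensional.basisSingleton_apply, hb]
  show e₂ (R.f i (b₁ ())) = ((LinearMap.single k _ i).prodMap 0) (e₁ (b₁ ()))
  rw [hfb]
  ext j
  · simp [e₁, e₂, Pi.single_apply, Finsupp.single_apply, eq_comm]
  · simp [e₁, e₂]

end QRep.IsE1AType

theorem Arep_isE1AType : (Arep k n).IsE1AType (n + 1) where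
  finiteDimensional_M2 := inferInstanceAs (FiniteDimensional k ((Fin n → k) × (Fin 1 → k)))
  finrank_M1 := show finrank k (k × (Fin 0 → k)) = 1 by simp
  finrank_M2 := show finrank k ((Fin n → k) × (Fin 1 → k)) = n + 1 by simp
  exists_linearIndependent := by
    refine ⟨((1 : k), (0 : Fin 0 → k)), fun h => one_ne_zero (α := k) (congrArg Prod.fst h), ?_⟩
    have hf : (fun i => (Arep k n).f i ((1 : k), (0 : Fin 0 → k))) =
        (LinearMap.inl k (Fin n → k) (Fin 1 → k) ∘ fun i => Pi.single i 1 :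
          Fin n → (Arep k n).M2) := by
      funext i
      exact Prod.ext (LinearMap.single_apply k (fun _ => k) (1 : k)) rfl
    rw [hf]
    exact (Pi.linearIndependent_single_one (Fin n) k).map' _ Submodule.ker_inl

theorem tpow_isE1AType (p : ℕ) : (tpow k n p).IsE1AType ((n + 1) ^ (p + 1)) := by
  induction p with
  | zero => simpa [tpow] using Arep_isE1AType
  | succ p ih =>
    rw [tpow, pow_succ]
    exact ih.tensor Arep_isE1AType

theorem stmt_4 (k : Type) [Field k] (n : ℕ) (p : ℕ) (hp : 1 ≤ p) :
    Nonempty (QRepIso (tpow k n (p - 1))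
      ((e1A k n).dsum (e2pow k n ((n + 1) ^ p - n)))) := by
  obtain ⟨q, rfl⟩ : ∃ q, p = q + 1 := ⟨p - 1, by omega⟩
  have hn : n ≤ (n + 1) ^ (q + 1) := (Nat.le_succ n).trans (Nat.le_self_pow q.succ_ne_zero _)
  apply QRep.IsE1AType.nonempty_qrepIso
  rw [Nat.add_sub_cancel, Nat.add_sub_cancel' hn]
  exact tpow_isE1AType q
end

section
/- Every admissible path in the Stasheff associahedron $A_n$ (viewed as a poset of vertices with admissible paths defined inductively) has exactly $n+1$ elements, i.e. its length equals the dimension $n$ of the associahedron. -/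
/-- `Interleave Q R P`: the path `P` in a product grid traverses all of `Q` by
horizontal steps and all of `R` by vertical steps. -/
inductive Interleave {α β : Type*} : List α → List β → List (α × β) → Prop
  | base (a : α) (b : β) : Interleave [a] [b] [(a, b)]
  | horiz (a₀ a : α) (b : β) (Q : List α) (R : List β) (P : List (α × β)) :
      Interleave (a :: Q) (b :: R) P → Interleave (a₀ :: a :: Q) (b :: R) ((a₀, b) :: P)
  | vert (a : α) (b₀ b : β) (Q : List α) (R : List β) (P : List (α × β)) :
      Interleave (a :: Q) (b :: R) P → Interleave (a :: Q) (b₀ :: b :: R) ((a, b₀) :: P)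

/-- Admissible paths of a product of two aposets, given the admissibility predicates of
the factors: `P` is admissible iff it interleaves an admissible path of the first factor
(traversed horizontally) with an admissible path of the second factor (traversed
vertically). -/
def ProdAdmP {α β : Type*} (admS : List α → Prop) (admT : List β → Prop)
    (P : List (α × β)) : Prop :=
  ∃ (Q : List α) (R : List β), admS Q ∧ admT R ∧ Interleave Q R P

/-- The system of Stasheff associahedra, viewed as aposets `Aₙ` with faces and
admissible paths, axiomatized by their inductive description:
* `V n` is the vertex set of the `n`-dimensional associahedron, a poset (ordered by the
  orientation of the 1-dimensional edges) with terminal vertex `top n`; `A₀` is a point;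
* the codimension-one faces of `Aₙ` (`n ≥ 1`) are products `A_{lf F} × A_{rf F}` with
  `lf F + rf F = n - 1`, included via the injective monotone map `emb F`;
* the unique admissible path of `A₀` is the whole singleton set, and a path `P` of `Aₙ`
  (`n ≥ 1`) is admissible iff its last vertex is the terminal vertex `top n` and the rest
  of it is (the image of) an admissible path of one of the codimension-one faces, where
  faces carry the product-aposet admissible paths. -/
structure AssocSystem where
  V : ℕ → Type
  po : ∀ n, PartialOrder (V n)
  subsingleton_zero : Subsingleton (V 0)
  top : ∀ n, V n
  top_le : ∀ n (v : V n), (po n).le v (top n)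
  Faces : ℕ → Type
  faces_zero : IsEmpty (Faces 0)
  lf : ∀ {n}, Faces n → ℕ
  rf : ∀ {n}, Faces n → ℕ
  dim_eq : ∀ {n} (F : Faces n), lf F + rf F + 1 = n
  emb : ∀ {n} (F : Faces n), V (lf F) × V (rf F) → V n
  emb_inj : ∀ {n} (F : Faces n), Function.Injective (emb F)
  adm : ∀ n, List (V n) → Prop
  adm_chain : ∀ n (P : List (V n)), adm n P → P.Chain' fun a b => (po n).lt a b
  adm_zero : ∀ P : List (V 0), adm 0 P ↔ ∃ v, P = [v]
  adm_succ : ∀ n, 1 ≤ n → ∀ P : List (V n),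
    adm n P ↔ ∃ (F : Faces n) (Q : List (V (lf F) × V (rf F))),
      ProdAdmP (adm (lf F)) (adm (rf F)) Q ∧ P = Q.map (emb F) ++ [top n]


lemma interleave_length {α β : Type*} {Q : List α} {R : List β} {P : List (α × β)}
    (h : Interleave Q R P) : P.length + 1 = Q.length + R.length := by
  induction h with
  | base a b => rfl
  | horiz a₀ a b Q R P h ih => simp_all [List.length]; omega
  | vert a b₀ b Q R P h ih => simp_all [List.length]; omega

/- STATEMENT 7: every admissible path of the `n`-dimensional Stasheff associahedron has
exactly `n + 1` elements, i.e. its length equals the dimension `n`. -/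
theorem stmt_7 (S : AssocSystem) (n : ℕ) (P : List (S.V n)) (hP : S.adm n P) :
    P.length = n + 1 := by
  induction n using Nat.strong_induction_on with
  | _ n ih =>
    rcases Nat.eq_zero_or_pos n with rfl | hn
    · obtain ⟨v, rfl⟩ := (S.adm_zero P).mp hP
      rfl
    · obtain ⟨F, Q, ⟨Ql, Rl, hQl, hRl, hI⟩, rfl⟩ := (S.adm_succ n hn P).mp hP
      have hd := S.dim_eq F
      have h1 := ih (S.lf F) (by omega) Ql hQl
      have h2 := ih (S.rf F) (by omega) Rl hRl
      have h3 := interleave_length hI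
      simp [List.length_append, List.length_map]
      omega
end
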